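/- arXiv:1709.10444 — 4 statements merged into one kernel-verified Lean document; each statement's English description precedes it below -/
import Mathlib

section
/- For integers y_1 < y_2 < ... < y_n and x_1 < x_2 < ... < x_n, the interlacing condition y_1 ≤ x_1 < y_2 ≤ x_2 < ... < y_n ≤ x_n holds if and only if det(1_{y_i ≤ x_j})_{i,j=1}^n = 1, and otherwise this determinant equals 0. -/
/-!
Let `t r` be the number of `x j` lying strictly below `y r`. As `x` is increasing,
`y r ≤ x j ↔ t r ≤ j`, so row `r` of the matrix is the indicator of `{j | t r ≤ j}`, and `t` is
monotone because `y` is. Interlacing says exactly that `t r = r` for all `r`, in which case the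
matrix is upper unitriangular. If the determinant is nonzero, no row vanishes and no two rows
coincide, so `t` is a strictly monotone self-map of `{0, …, n - 1}`, hence the identity.
-/

open Finset Matrix

section

variable {α : Type*} [LinearOrder α] {n : ℕ}

def Interlacing (y x : Fin n → α) : Prop :=
  ∀ i : Fin n, y i ≤ x i ∧ ∀ h : (i : ℕ) + 1 < n, x i < y ⟨(i : ℕ) + 1, h⟩

theorem le_iff_card_filter_lt_le {x : Fin n → α} (hx : StrictMono x) (a : α) (j : Fin n) :
    a ≤ x j ↔ #{j' | x j' < a} ≤ (j : ℕ) := by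
  constructor
  · intro h
    calc #{j' | x j' < a} ≤ #(Iio j) := card_le_card fun j' hj' => by
          simp only [mem_filter, mem_univ, true_and] at hj'
          exact mem_Iio.2 (hx.lt_iff_lt.1 (hj'.trans_le h))
      _ = j := Fin.card_Iio j
  · intro h
    by_contra! hlt
    have : (j : ℕ) + 1 ≤ #{j' | x j' < a} :=
      calc (j : ℕ) + 1 = #(Iic j) := (Fin.card_Iic j).symm
        _ ≤ _ := card_le_card fun j' hj' => by
          simp only [mem_filter, mem_univ, true_and]
          exact (hx.monotone (mem_Iic.1 hj')).trans_lt hlt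
    omega

theorem interlacing_iff_card_filter_lt_eq {y x : Fin n → α} (hx : StrictMono x) :
    Interlacing y x ↔ ∀ i, #{j | x j < y i} = i := by
  have lt_iff (i j : Fin n) : x j < y i ↔ (j : ℕ) < #{j' | x j' < y i} := by
    rw [← not_le, le_iff_card_filter_lt_le hx, not_le]
  constructor
  · rintro h ⟨_ | k, hi⟩
    · exact Nat.eq_zero_of_le_zero ((le_iff_card_filter_lt_le hx _ _).1 (h _).1)
    · refine le_antisymm ((le_iff_card_filter_lt_le hx _ _).1 (h _).1) ?_
      exact (lt_iff _ ⟨k, by omega⟩).1 ((h ⟨k, by omega⟩).2 hi)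
  · intro h i
    refine ⟨(le_iff_card_filter_lt_le hx _ _).2 (h i).le, fun hi => (lt_iff _ _).2 ?_⟩
    rw [h]
    exact Nat.lt_succ_self i

end

section

variable {R : Type*} [CommRing R] {n : ℕ}

theorem det_of_le_eq_one : (of fun i j : Fin n => if i ≤ j then (1 : R) else 0).det = 1 := by
  rw [det_of_isUpperTriangular (M := of fun i j : Fin n => if i ≤ j then (1 : R) else 0)
    fun i j hji => if_neg (not_le.2 hji)]
  simp

theorem val_eq_of_det_of_le_ne_zero {t : Fin n → ℕ} (ht : Monotone t)
    (hdet : (of fun i j : Fin n => if t i ≤ j then (1 : R) else 0).det ≠ 0) (i : Fin n) :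
    t i = i := by
  have hlt (r : Fin n) : t r < n := by
    by_contra! hr
    exact hdet (det_eq_zero_of_row_eq_zero r fun j => if_neg (by omega))
  have hinj : Function.Injective t := fun a b hab => by
    by_contra hne
    exact hdet (det_zero_of_row_eq hne (funext fun j => by simp [hab]))
  let s : Fin n → Fin n := fun r => ⟨t r, hlt r⟩
  have hs : StrictMono s :=
    Monotone.strictMono_of_injective ht fun a b hab => hinj (congrArg Fin.val hab)
  exact congrArg Fin.val hs.apply_eq

end

/-- For strictly increasing integer sequences `y` and `x`, the interlacing condition
`y₁ ≤ x₁ < y₂ ≤ x₂ < ⋯ ≤ xₙ` holds iff `det(1_{yᵢ ≤ xⱼ}) = 1`, and otherwise the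
determinant equals 0. -/
theorem stmt0 (n : ℕ) (y x : Fin n → ℤ) (hy : StrictMono y) (hx : StrictMono x) :
    ((∀ i : Fin n, y i ≤ x i ∧ ∀ h : (i : ℕ) + 1 < n, x i < y ⟨(i : ℕ) + 1, h⟩) ↔
      Matrix.det (Matrix.of fun i j : Fin n => if y i ≤ x j then (1 : ℤ) else 0) = 1) ∧
    (¬ (∀ i : Fin n, y i ≤ x i ∧ ∀ h : (i : ℕ) + 1 < n, x i < y ⟨(i : ℕ) + 1, h⟩) →
      Matrix.det (Matrix.of fun i j : Fin n => if y i ≤ x j then (1 : ℤ) else 0) = 0) := by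
  set t : Fin n → ℕ := fun r => #{j | x j < y r}
  have hM : (of fun i j : Fin n => if y i ≤ x j then (1 : ℤ) else 0) =
      of fun i (j : Fin n) => if t i ≤ (j : ℕ) then 1 else 0 := by
    ext i j
    simp only [of_apply, le_iff_card_filter_lt_le hx, t]
  have ht : Monotone t := fun a b hab => card_le_card fun j hj => by
    simp only [mem_filter, mem_univ, true_and] at hj ⊢
    exact hj.trans_le (hy.monotone hab)
  change (Interlacing y x ↔ _) ∧ (¬ Interlacing y x → _)
  rw [hM, interlacing_iff_card_filter_lt_eq hx]
  have of_ne_zero : (of fun i (j : Fin n) => if t i ≤ (j : ℕ) then (1 : ℤ) else 0).det ≠ 0 →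
      ∀ i, t i = i :=
    val_eq_of_det_of_le_ne_zero ht
  refine ⟨⟨fun h => ?_, fun h => of_ne_zero (by simp [h])⟩, fun h => not_not.1 (mt of_ne_zero h)⟩
  rw [show t = Fin.val from funext h]
  simpa only [Fin.val_fin_le] using det_of_le_eq_one
end

section
/- For the difference operator L acting on functions f: I → ℝ (I = ℕ or ℤ) by (Lf)(x) = (ax² + bx + c)(f(x+1) - f(x)) + (ax² + b̄x + c̄)(f(x-1) - f(x)), the Vandermonde function Δ_n(x) = ∏_{1≤i<j≤n}(x_j - x_i) satisfies ∑_{i=1}^n L_{x_i} Δ_n(x) = (a·n(n-1)(n-2)/3 + (b - b̄)·n(n-1)/2)·Δ_n(x) for all x with x_1 < x_2 < ... < x_n. -/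
/-!
Moving the node `uᵢ` to `uᵢ + ε` multiplies `Δₙ` by `∏_{j ≠ i} (1 + ε / (uᵢ - uⱼ))`. Expanding
these products over subsets and regrouping by `T = S ∪ {i}`, the left side divided by `Δₙ` becomes
a sum over subsets `T` of `∑_{i ∈ T} f_T(uᵢ) / ∏_{j ∈ T, j ≠ i} (uᵢ - uⱼ)`, where, for the rates
`p` and `q`, `f_T = p + (-1)^(|T|-1) q` (and `f_T = 0` when `|T| = 1`, absorbing the `- f(x)`
terms). Since `deg f_T < |T|` (the `x²` terms cancel when `|T| = 2`), Lagrange interpolation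
turns this sum into the coefficient of `X^(|T|-1)` in `f_T`: `b - b̄` for `|T| = 2`, `2a` for
`|T| = 3`, and `0` otherwise.
-/

/-- The Vandermonde determinant `Δₙ(x) = ∏_{i<j} (xⱼ - xᵢ)` for integer points,
as a real number. -/
noncomputable def vand (n : ℕ) (x : Fin n → ℤ) : ℝ :=
  ∏ i : Fin n, ∏ j ∈ Finset.Ioi i, ((x j : ℝ) - (x i : ℝ))

open Finset Matrix Polynomial

theorem Fin.prod_univ_erase_eq_prod_succAbove {M : Type*} [CommMonoid M] {n : ℕ}
    (f : Fin (n + 1) → M) (i : Fin (n + 1)) :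
    ∏ j ∈ univ.erase i, f j = ∏ j : Fin n, f (i.succAbove j) := by
  rw [Fin.univ_succAbove n i, erase_cons, prod_map, Fin.coe_succAboveEmb]

theorem Finset.sum_sum_powerset_erase {ι M : Type*} [DecidableEq ι] [AddCommMonoid M]
    (s : Finset ι) (f : ι → Finset ι → M) :
    ∑ i ∈ s, ∑ t ∈ (s.erase i).powerset, f i t = ∑ t ∈ s.powerset, ∑ i ∈ t, f i (t.erase i) := by
  rw [sum_sigma', sum_sigma']
  refine sum_bij' (fun x _ => ⟨insert x.1 x.2, x.1⟩) (fun x _ => ⟨x.2, x.1.erase x.2⟩)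
    ?_ ?_ ?_ ?_ ?_
  all_goals
    simp only [mem_sigma, mem_powerset, and_imp, Sigma.forall]
    grind [erase_insert, insert_erase]

namespace Matrix

theorem exists_det_vandermonde_update {R : Type*} [CommRing R] {n : ℕ} (u : Fin n → R)
    (i : Fin n) :
    ∃ r : R, ∀ y, (vandermonde (Function.update u i y)).det
      = r * ∏ j ∈ univ.erase i, (u j - y) := by
  cases n with
  | zero => exact i.elim0
  | succ m =>
  -- permute the rows so that node `i` comes first, where `det_vandermonde` splits it off
  set σ : Equiv.Perm (Fin (m + 1)) := i.cycleRange.symm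
  set s : R := ((Equiv.Perm.sign σ : ℤ) : R)
  refine ⟨s * (vandermonde (u ∘ i.succAbove)).det, fun y => ?_⟩
  have hperm : (vandermonde (Function.update u i y ∘ σ)).det
      = s * (vandermonde (Function.update u i y)).det :=
    det_permute σ (vandermonde (Function.update u i y))
  have h0 : (Function.update u i y ∘ σ) 0 = y := by simp [σ, Fin.cycleRange_symm_zero]
  have hsucc : ∀ j : Fin m, (Function.update u i y ∘ σ) j.succ = u (i.succAbove j) := by
    intro j
    simp [σ, Fin.cycleRange_symm_succ]
  rw [det_vandermonde, Fin.prod_univ_succ, Fin.prod_Ioi_zero] at hperm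
  simp only [Fin.prod_Ioi_succ, hsucc, h0] at hperm
  have hsq : s * s = 1 := by simp [s, ← Int.cast_mul]
  rw [Fin.prod_univ_erase_eq_prod_succAbove, det_vandermonde (u ∘ _)]
  simp only [Function.comp_apply]
  linear_combination (-s) * hperm - (vandermonde (Function.update u i y)).det * hsq

theorem det_vandermonde_update_mul {R : Type*} [CommRing R] {n : ℕ} (u : Fin n → R) (i : Fin n)
    (y : R) :
    (vandermonde (Function.update u i y)).det * ∏ j ∈ univ.erase i, (u j - u i)
      = (vandermonde u).det * ∏ j ∈ univ.erase i, (u j - y) := by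
  obtain ⟨r, hr⟩ := exists_det_vandermonde_update u i
  have hself := hr (u i)
  rw [Function.update_eq_self] at hself
  rw [hr y, hself]
  ring

theorem det_vandermonde_update {K : Type*} [Field K] {n : ℕ} {u : Fin n → K}
    (hu : Function.Injective u) (i : Fin n) (y : K) :
    (vandermonde (Function.update u i y)).det
      = (vandermonde u).det * ∏ j ∈ univ.erase i, (u j - y) / (u j - u i) := by
  have hne : ∏ j ∈ univ.erase i, (u j - u i) ≠ 0 :=
    prod_ne_zero_iff.2 fun j hj => sub_ne_zero.2 (hu.ne (ne_of_mem_erase hj))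
  rw [prod_div_distrib, ← mul_div_assoc, eq_div_iff hne, det_vandermonde_update_mul]

end Matrix

section Field

variable {K : Type*} [Field K]

theorem prod_sub_div_sub_sub_one {ι : Type*} {s : Finset ι} {u : ι → K} {x : K}
    (hx : ∀ j ∈ s, u j ≠ x) (ε : K) :
    ∏ j ∈ s, (u j - (x + ε)) / (u j - x) - 1
      = ∑ t ∈ s.powerset, (ε ^ #t - 0 ^ #t) / ∏ j ∈ t, (x - u j) := by
  have hexpand : ∀ δ : K, ∏ j ∈ s, (u j - (x + δ)) / (u j - x)
      = ∑ t ∈ s.powerset, δ ^ #t / ∏ j ∈ t, (x - u j) := by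
    intro δ
    have hfactor : ∀ j ∈ s, (u j - (x + δ)) / (u j - x) = 1 + δ / (x - u j) := by
      intro j hj
      have : x - u j ≠ 0 := sub_ne_zero.2 (hx j hj).symm
      have : u j - x ≠ 0 := sub_ne_zero.2 (hx j hj)
      field_simp
      ring
    rw [prod_congr rfl hfactor, prod_one_add]
    simp only [prod_div_distrib, prod_const]
  have hone : ∏ j ∈ s, (u j - (x + 0)) / (u j - x) = 1 :=
    prod_eq_one fun j hj => by rw [add_zero, div_self (sub_ne_zero.2 (hx j hj))]
  rw [← hone, hexpand, hexpand, ← sum_sub_distrib]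
  simp only [sub_div]

/-- The polynomial multiplying `1 / ∏_{j ∈ t} (x - u j)`, `#t = m`, when the rates `p` and `q`
are expanded over subsets: `p` comes with `1 ^ m - 0 ^ m`, `q` with `(-1) ^ m - 0 ^ m`. -/
noncomputable def combinedRate (p q : K[X]) (m : ℕ) : K[X] :=
  (1 - 0 ^ m : K) • p + ((-1) ^ m - 0 ^ m : K) • q

theorem degree_combinedRate_lt {p q : K[X]} (hp : p.degree ≤ 2) (hq : q.degree ≤ 2)
    (hpq : (p - q).degree ≤ 1) (m : ℕ) : (combinedRate p q m).degree < (m + 1 : ℕ) := by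
  rcases m with _ | _ | m
  · simp [combinedRate]
  · simpa [combinedRate, ← sub_eq_add_neg] using hpq.trans_lt (by norm_num)
  · have h2 : (2 : WithBot ℕ) < ↑(m + 2 + 1) := by exact_mod_cast (by omega : 2 < m + 2 + 1)
    exact (degree_add_le _ _).trans_lt
      (max_lt ((degree_smul_le _ _).trans_lt (hp.trans_lt h2))
        ((degree_smul_le _ _).trans_lt (hq.trans_lt h2)))

theorem sum_choose_smul_coeff_combinedRate {p q : K[X]} (hp : p.degree ≤ 2) (hq : q.degree ≤ 2)
    (N : ℕ) :
    ∑ k ∈ range (N + 1), N.choose k • (combinedRate p q (k - 1)).coeff (k - 1)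
      = N.choose 2 * (p.coeff 1 - q.coeff 1) + N.choose 3 * (p.coeff 2 + q.coeff 2) := by
  have hvanish : ∀ k, k ≠ 2 → k ≠ 3 → (combinedRate p q (k - 1)).coeff (k - 1) = 0 := by
    intro k h2 h3
    rcases Nat.lt_or_ge k 2 with hk | hk
    · have : k - 1 = 0 := by omega
      simp [combinedRate, this]
    · rw [combinedRate, coeff_add, coeff_smul, coeff_smul,
        coeff_eq_zero_of_degree_lt (hp.trans_lt ?_), coeff_eq_zero_of_degree_lt (hq.trans_lt ?_)]
      · simp
      all_goals exact_mod_cast (by omega : 2 < k - 1)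
  rw [sum_eq_add 2 3 (by norm_num)]
  · simp [combinedRate]
    ring
  · intro k _ hk
    rw [hvanish k hk.1 hk.2, smul_zero]
  · intro h
    rw [Nat.choose_eq_zero_of_lt (by simpa using h), zero_smul]
  · intro h
    rw [Nat.choose_eq_zero_of_lt (by simpa using h), zero_smul]

theorem sum_eval_mul_prod_shift_sub_one {ι : Type*} [DecidableEq ι] {s : Finset ι} {u : ι → K}
    (hu : Set.InjOn u s) {p q : K[X]} (hp : p.degree ≤ 2) (hq : q.degree ≤ 2)
    (hpq : (p - q).degree ≤ 1) :
    ∑ i ∈ s, (p.eval (u i) * (∏ j ∈ s.erase i, (u j - (u i + 1)) / (u j - u i) - 1)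
        + q.eval (u i) * (∏ j ∈ s.erase i, (u j - (u i + -1)) / (u j - u i) - 1))
      = (#s).choose 2 * (p.coeff 1 - q.coeff 1) + (#s).choose 3 * (p.coeff 2 + q.coeff 2) := by
  have hexpand : ∀ i ∈ s,
      p.eval (u i) * (∏ j ∈ s.erase i, (u j - (u i + 1)) / (u j - u i) - 1)
        + q.eval (u i) * (∏ j ∈ s.erase i, (u j - (u i + -1)) / (u j - u i) - 1)
      = ∑ t ∈ (s.erase i).powerset, (combinedRate p q #t).eval (u i) / ∏ j ∈ t, (u i - u j) := by
    intro i hi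
    have hne : ∀ j ∈ s.erase i, u j ≠ u i := fun j hj =>
      hu.ne (mem_of_mem_erase hj) hi (ne_of_mem_erase hj)
    rw [prod_sub_div_sub_sub_one hne, prod_sub_div_sub_sub_one hne, mul_sum, mul_sum,
      ← sum_add_distrib]
    refine sum_congr rfl fun t _ => ?_
    simp only [combinedRate, eval_add, eval_smul, smul_eq_mul]
    ring
  rw [sum_congr rfl hexpand, sum_sum_powerset_erase]
  have hlagrange : ∀ t ∈ s.powerset,
      ∑ i ∈ t, (combinedRate p q #(t.erase i)).eval (u i) / ∏ j ∈ t.erase i, (u i - u j)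
        = (combinedRate p q (#t - 1)).coeff (#t - 1) := by
    intro t ht
    rcases t.eq_empty_or_nonempty with rfl | ht'
    · simp [combinedRate]
    · have hdeg := degree_combinedRate_lt hp hq hpq (#t - 1)
      rw [Nat.sub_add_cancel ht'.card_pos] at hdeg
      rw [Lagrange.coeff_eq_sum (hu.mono (mem_powerset.1 ht)) hdeg]
      exact sum_congr rfl fun i hi => by rw [card_erase_of_mem hi]
  rw [sum_congr rfl hlagrange,
    sum_powerset_apply_card (fun k => (combinedRate p q (k - 1)).coeff (k - 1)),
    sum_choose_smul_coeff_combinedRate hp hq]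

end Field

/-- The Vandermonde function is an eigenfunction of the sum of one-dimensional quadratic-rate
difference operators: `∑ᵢ L_{xᵢ} Δₙ = (a n(n-1)(n-2)/3 + (b - b̄) n(n-1)/2) Δₙ`. -/
theorem stmt6 (n : ℕ) (a b c b' c' : ℝ) (x : Fin n → ℤ) (hx : StrictMono x) :
    ∑ i : Fin n,
      ((a * (x i : ℝ) ^ 2 + b * (x i : ℝ) + c) *
          (vand n (Function.update x i (x i + 1)) - vand n x)
        + (a * (x i : ℝ) ^ 2 + b' * (x i : ℝ) + c') *
          (vand n (Function.update x i (x i - 1)) - vand n x))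
      = (a * (n : ℝ) * ((n : ℝ) - 1) * ((n : ℝ) - 2) / 3
          + (b - b') * (n : ℝ) * ((n : ℝ) - 1) / 2) * vand n x := by
  set u : Fin n → ℝ := fun i => (x i : ℝ)
  have hu : Function.Injective u := Int.cast_injective.comp hx.injective
  have hvand : ∀ z : Fin n → ℤ, vand n z = (vandermonde fun j => (z j : ℝ)).det :=
    fun z => (det_vandermonde _).symm
  have hupdate : ∀ i (z : ℤ), (fun j => ((Function.update x i z j : ℤ) : ℝ))
      = Function.update u i (z : ℝ) := fun i z => Function.comp_update _ _ _ _
  set p : ℝ[X] := C a * X ^ 2 + C b * X + C c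
  set q : ℝ[X] := C a * X ^ 2 + C b' * X + C c'
  have hpq : (p - q).degree ≤ 1 := by
    have : p - q = C (b - b') * X + C (c - c') := by simp only [p, q, map_sub]; ring
    rw [this]
    exact degree_linear_le
  have key := sum_eval_mul_prod_shift_sub_one hu.injOn (s := univ) (p := p) (q := q)
    degree_quadratic_le degree_quadratic_le hpq
  simp only [hvand, hupdate, Int.cast_add, Int.cast_sub, Int.cast_one, det_vandermonde_update hu]
  simp only [← sub_eq_add_neg, card_univ, Fintype.card_fin] at key
  convert congrArg (· * (vandermonde u).det) key using 1
  · rw [sum_mul]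
    refine sum_congr rfl fun i _ => ?_
    simp only [p, q, eval_add, eval_mul, eval_C, eval_pow, eval_X]
    ring
  · simp [p, q, coeff_C, Nat.cast_choose_eq_descPochhammer_div, descPochhammer_succ_right,
      Nat.factorial]
    ring
end

section
/- Let Q_{ν_i} be polynomials with Q_k(0) = 1 for all k, and let ν_1 < ν_2 < ... < ν_{n+1} be nonnegative integers. Then the multivariate polynomial det(Q_{ν_i}(x_j))_{i,j=1}^{n+1} / det(x_j^{i-1})_{i,j=1}^{n+1}, evaluated at x_1 = 0 (as the limit/polynomial evaluation), equals det((Q_{ν_{i+1}}(x_{j+1}) - Q_{ν_i}(x_{j+1}))/x_{j+1})_{i,j=1}^{n} / det(x_{j+1}^{i-1})_{i,j=1}^{n}. -/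
/-!
Subtracting from each row of `(Q_{νᵢ}(xⱼ))` the previous one leaves the first row untouched
and, since `Qₖ(0) = 1` and `x₁ = 0`, turns the first column into `(1, 0, …, 0)`; expanding along
it gives the determinant of the differences `Q_{ν_{i+1}}(x_{j+1}) - Q_{νᵢ}(x_{j+1})`. The
Vandermonde determinant expands the same way, picking up the factor `∏ⱼ x_{j+1}`, which is exactly
the factor pulled out of the columns by the divisions on the right-hand side.
-/

open Matrix

namespace Matrix

variable {R : Type*} [CommRing R] {n : ℕ}

theorem det_eq_mul_det_submatrix_succ_of_col_zero (A : Matrix (Fin (n + 1)) (Fin (n + 1)) R)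
    (h : ∀ i : Fin n, A i.succ 0 = 0) :
    A.det = A 0 0 * (A.submatrix Fin.succ Fin.succ).det := by
  rw [det_succ_column_zero, Fin.sum_univ_succ, Fintype.sum_eq_zero _ fun i => by simp [h]]
  simp

theorem det_eq_det_row_sub_pred_of_col_zero_eq_one (A : Matrix (Fin (n + 1)) (Fin (n + 1)) R)
    (h : ∀ i, A i 0 = 1) :
    A.det = (of fun i j : Fin n => A i.succ j.succ - A i.castSucc j.succ).det := by
  let B : Matrix (Fin (n + 1)) (Fin (n + 1)) R :=
    of (Fin.cons (A 0) fun (i : Fin n) j => A i.succ j - A i.castSucc j)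
  have hAB : A.det = B.det :=
    det_eq_of_forall_row_eq_smul_add_pred (fun _ => 1) (fun _ => rfl) fun i j => by simp [B]
  rw [hAB, det_eq_mul_det_submatrix_succ_of_col_zero B fun i => by simp [B, h]]
  simp only [B, of_apply, Fin.cons_zero, h, one_mul]
  rfl

theorem det_vandermonde_of_eq_zero (x : Fin (n + 1) → R) (hx0 : x 0 = 0) :
    (vandermonde x).det =
      (∏ j : Fin n, x j.succ) * (vandermonde fun j : Fin n => x j.succ).det := by
  rw [← det_transpose, det_eq_mul_det_submatrix_succ_of_col_zero _ fun i => by simp [hx0],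
    ← det_transpose (vandermonde _), ← det_mul_row]
  simp only [transpose_apply, vandermonde_apply, hx0, Fin.val_zero, pow_zero, one_mul]
  congr 1
  ext i j
  simp [pow_succ']

theorem det_of_div_col {K m : Type*} [Field K] [Fintype m] [DecidableEq m]
    (f : m → m → K) (v : m → K) :
    (of fun i j => f i j / v j).det = (∏ j, v j)⁻¹ * (of f).det := by
  simpa [div_eq_inv_mul, Finset.prod_inv_distrib] using det_mul_row (fun j => (v j)⁻¹) (of f)

end Matrix

theorem stmt14_general (n : ℕ) (Q : ℕ → Polynomial ℝ) (hQ : ∀ k, (Q k).eval 0 = 1)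
    (ν : Fin (n + 1) → ℕ)
    (x : Fin (n + 1) → ℝ) (hx0 : x 0 = 0) :
    Matrix.det (Matrix.of fun i j : Fin (n + 1) => (Q (ν i)).eval (x j)) /
        Matrix.det (Matrix.of fun i j : Fin (n + 1) => x j ^ (i : ℕ))
      = Matrix.det (Matrix.of fun i j : Fin n =>
            ((Q (ν i.succ)).eval (x j.succ) - (Q (ν i.castSucc)).eval (x j.succ)) / x j.succ) /
        Matrix.det (Matrix.of fun i j : Fin n => x j.succ ^ (i : ℕ)) := by
  have hden : (of fun i j : Fin (n + 1) => x j ^ (i : ℕ)).det =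
      (∏ j : Fin n, x j.succ) * (of fun i j : Fin n => x j.succ ^ (i : ℕ)).det := by
    rw [← det_transpose, ← det_transpose (of _)]
    exact det_vandermonde_of_eq_zero x hx0
  rw [det_eq_det_row_sub_pred_of_col_zero_eq_one _ fun i => by simp [hx0, hQ], hden,
    det_of_div_col]
  simp only [of_apply]
  ring

/-- Evaluating the Karlin–McGregor polynomial ratio at `x₁ = 0` (using `Qₖ(0) = 1`):
`det(Q_{νᵢ}(xⱼ))/det(xⱼ^{i-1})` over `n+1` variables with `x₁ = 0` equals
`det((Q_{ν_{i+1}}(x_{j+1}) - Q_{νᵢ}(x_{j+1}))/x_{j+1}) / det(x_{j+1}^{i-1})` over `n`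
variables. -/
theorem stmt14 (n : ℕ) (Q : ℕ → Polynomial ℝ) (hQ : ∀ k, (Q k).eval 0 = 1)
    (ν : Fin (n + 1) → ℕ) (hν : StrictMono ν)
    (x : Fin (n + 1) → ℝ) (hx0 : x 0 = 0) (hinj : Function.Injective x) :
    Matrix.det (Matrix.of fun i j : Fin (n + 1) => (Q (ν i)).eval (x j)) /
        Matrix.det (Matrix.of fun i j : Fin (n + 1) => x j ^ (i : ℕ))
      = Matrix.det (Matrix.of fun i j : Fin n =>
            ((Q (ν i.succ)).eval (x j.succ) - (Q (ν i.castSucc)).eval (x j.succ)) / x j.succ) /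
        Matrix.det (Matrix.of fun i j : Fin n => x j.succ ^ (i : ℕ)) :=
  stmt14_general n Q hQ ν x hx0
end

section
/- Let Q̂_{ν_i} and Q_k be polynomial families related by Q̂_m(x) = ∑_{k=0}^m π(k)·Q_k(x) for positive weights π(k). Then for ν_1 < ... < ν_n, det(Q̂_{ν_i}(x_j))_{i,j=1}^n = ∑_{k} (∏_{i=1}^n π(k_i)) · det(Q_{k_i}(x_j))_{i,j=1}^n, where the sum is over all integer tuples k = (k_1,...,k_n) with ν_0+1 := 0 ≤ k_1 ≤ ν_1 < k_2 ≤ ν_2 < ... < k_n ≤ ν_n (i.e., k interlaces with ν in the sense ν_{i-1} < k_i ≤ ν_i). -/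
/-!
Writing `Q̂_{ν_i}` as the sum of the blocks `∑_{ν_{i'-1} < m ≤ ν_{i'}} π(m) Q_m` over `i' ≤ i`,
the matrix `(Q̂_{ν_i}(x_j))` is the product of the lower unitriangular all-ones matrix with the
matrix of blocks, so it has the same determinant. Expanding the latter by multilinearity in its
rows gives one term for each choice of `k_i` in the `i`-th block, i.e. for each `k` interlacing `ν`.
-/

open Finset

section Interlacing

variable {ι : Type*} [Fintype ι] [LinearOrder ι]

-- `ν_{i-1} < m ≤ ν_i`, with the lower bound taken over all earlier indices so that `ι` needs no
-- predecessor function; for monotone `ν` the two readings agree.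
def interlacingBlock (ν : ι → ℕ) (i : ι) : Finset ℕ :=
  {m ∈ range (ν i + 1) | ∀ i' < i, ν i' < m}

theorem mem_interlacingBlock {ν : ι → ℕ} {i : ι} {m : ℕ} :
    m ∈ interlacingBlock ν i ↔ m ≤ ν i ∧ ∀ i' < i, ν i' < m := by
  simp [interlacingBlock]

theorem pairwiseDisjoint_interlacingBlock (ν : ι → ℕ) :
    (Set.univ : Set ι).PairwiseDisjoint (interlacingBlock ν) := by
  suffices h : ∀ a b, a < b → Disjoint (interlacingBlock ν a) (interlacingBlock ν b) from
    fun a _ b _ hab => hab.lt_or_gt.elim (h a b) fun hba => (h b a hba).symm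
  intro a b hab
  refine disjoint_left.mpr fun m hma hmb => ?_
  have := (mem_interlacingBlock.mp hma).1
  have := (mem_interlacingBlock.mp hmb).2 a hab
  omega

theorem biUnion_interlacingBlock {ν : ι → ℕ} (hν : Monotone ν) (i : ι) :
    ({i' | i' ≤ i} : Finset ι).biUnion (interlacingBlock ν) = range (ν i + 1) := by
  ext m
  simp only [mem_biUnion, mem_filter, mem_univ, true_and, mem_interlacingBlock, mem_range,
    Nat.lt_succ_iff]
  constructor
  · rintro ⟨i', hi', hm, -⟩
    exact hm.trans (hν hi')
  · intro hm
    -- `m` lies in the block of the first index `i₀` with `m ≤ ν i₀`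
    have hne : ({i' | m ≤ ν i'} : Finset ι).Nonempty := ⟨i, by simpa using hm⟩
    have hi₀ := mem_filter.mp (({i' | m ≤ ν i'} : Finset ι).min'_mem hne)
    refine ⟨_, ?_, hi₀.2, fun i' hi' => ?_⟩
    · exact min'_le _ _ (by simpa using hm)
    · by_contra! h
      exact hi'.not_ge (min'_le _ _ (by simpa using h))

theorem sum_range_succ_eq_sum_interlacingBlock {M : Type*} [AddCommMonoid M] {ν : ι → ℕ}
    (hν : Monotone ν) (i : ι) (f : ℕ → M) :
    ∑ m ∈ range (ν i + 1), f m = ∑ i' ∈ ({i' | i' ≤ i} : Finset ι),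
      ∑ m ∈ interlacingBlock ν i', f m := by
  rw [← biUnion_interlacingBlock hν i,
    sum_biUnion ((pairwiseDisjoint_interlacingBlock ν).subset (Set.subset_univ _))]

end Interlacing

theorem Matrix.det_of_sum_rows_le {ι R : Type*} [Fintype ι] [LinearOrder ι] [CommRing R]
    (B : Matrix ι ι R) :
    (Matrix.of fun i j => ∑ i' ∈ ({i' | i' ≤ i} : Finset ι), B i' j).det = B.det := by
  let L : Matrix ι ι R := Matrix.of fun i i' => if i' ≤ i then 1 else 0
  have hL : L.det = 1 := by
    rw [Matrix.det_of_isLowerTriangular L fun i j hij => if_neg hij.not_ge]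
    simp [L]
  have hLB : (Matrix.of fun i j => ∑ i' ∈ ({i' | i' ≤ i} : Finset ι), B i' j) = L * B := by
    ext i j
    simp [L, Matrix.mul_apply, ite_mul, sum_ite]
  rw [hLB, Matrix.det_mul, hL, one_mul]

theorem Matrix.det_of_sum_mul_rows {ι α R : Type*} [Fintype ι] [DecidableEq ι] [CommRing R]
    (s : ι → Finset α) (c : α → R) (v : α → ι → R) :
    (Matrix.of fun i j => ∑ m ∈ s i, c m * v m j).det
      = ∑ k ∈ Fintype.piFinset s, (∏ i, c (k i)) * (Matrix.of fun i j => v (k i) j).det := by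
  have h := (Matrix.detRowAlternating (R := R) (n := ι)).map_sum_finset (fun _ m => c m • v m) s
  have hrows : (fun i => ∑ m ∈ s i, c m • v m) = Matrix.of fun i j => ∑ m ∈ s i, c m * v m j := by
    ext i j; simp [Finset.sum_apply]
  rw [hrows] at h
  refine h.trans (sum_congr rfl fun k _ => ?_)
  exact (Matrix.detRowAlternating.map_smul_univ (fun i => c (k i)) fun i => v (k i)).trans (by rfl)

theorem interlacing_iff_forall_lt {n : ℕ} {ν k : Fin n → ℕ} (hν : Monotone ν) :
    (∀ i j : Fin n, (i : ℕ) + 1 = (j : ℕ) → ν i < k j) ↔ ∀ j, ∀ i < j, ν i < k j := by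
  refine ⟨fun h j i hij => ?_, fun h i j hij => h j i (Fin.lt_def.mpr (by omega))⟩
  have hj : (j : ℕ) - 1 + 1 = j := by omega
  calc ν i ≤ ν ⟨j - 1, by omega⟩ := hν (Fin.le_def.mpr (Nat.le_sub_one_of_lt hij))
    _ < k j := h _ _ hj

theorem filter_piFinset_range_interlacing {n : ℕ} {ν : Fin n → ℕ} (hν : Monotone ν) :
    (Fintype.piFinset fun i : Fin n => range (ν i + 1)).filter
        (fun k => ∀ i j : Fin n, (i : ℕ) + 1 = (j : ℕ) → ν i < k j)
      = Fintype.piFinset (interlacingBlock ν) := by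
  ext k
  simp only [mem_filter, Fintype.mem_piFinset, mem_range, Nat.lt_add_one_iff,
    interlacing_iff_forall_lt hν, mem_interlacingBlock, forall_and]

theorem stmt15_general (n : ℕ) (Q Qhat : ℕ → Polynomial ℝ) (pi' : ℕ → ℝ)
    (hrel : ∀ m, Qhat m = ∑ k ∈ Finset.range (m + 1), Polynomial.C (pi' k) * Q k)
    (ν : Fin n → ℕ) (hν : StrictMono ν) (x : Fin n → ℝ) :
    Matrix.det (Matrix.of fun i j : Fin n => (Qhat (ν i)).eval (x j))
      = ∑ k ∈ (Fintype.piFinset fun i : Fin n => Finset.range (ν i + 1)).filter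
          (fun k => ∀ i j : Fin n, (i : ℕ) + 1 = (j : ℕ) → ν i < k j),
          (∏ i, pi' (k i)) * Matrix.det (Matrix.of fun i j : Fin n => (Q (k i)).eval (x j)) := by
  let B : Matrix (Fin n) (Fin n) ℝ :=
    Matrix.of fun i j => ∑ m ∈ interlacingBlock ν i, pi' m * (Q m).eval (x j)
  have hrows : (Matrix.of fun i j : Fin n => (Qhat (ν i)).eval (x j))
      = Matrix.of fun i j => ∑ i' ∈ ({i' | i' ≤ i} : Finset (Fin n)), B i' j := by
    ext i j
    simp only [Matrix.of_apply, B, hrel, Polynomial.eval_finsetSum, Polynomial.eval_mul,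
      Polynomial.eval_C, sum_range_succ_eq_sum_interlacingBlock hν.monotone]
  rw [hrows, Matrix.det_of_sum_rows_le, Matrix.det_of_sum_mul_rows,
    filter_piFinset_range_interlacing hν.monotone]

/-- Branching rule for multivariate Karlin–McGregor polynomials:
`det(Q̂_{νᵢ}(xⱼ)) = ∑_{k interlacing ν} (∏ᵢ π(kᵢ)) det(Q_{kᵢ}(xⱼ))`, where the sum is over
tuples `k` with `ν_{i-1} < kᵢ ≤ νᵢ` (and `k₁ ≥ 0`). -/
theorem stmt15 (n : ℕ) (Q Qhat : ℕ → Polynomial ℝ) (pi' : ℕ → ℝ) (hpi : ∀ k, 0 < pi' k)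
    (hrel : ∀ m, Qhat m = ∑ k ∈ Finset.range (m + 1), Polynomial.C (pi' k) * Q k)
    (ν : Fin n → ℕ) (hν : StrictMono ν) (x : Fin n → ℝ) :
    Matrix.det (Matrix.of fun i j : Fin n => (Qhat (ν i)).eval (x j))
      = ∑ k ∈ (Fintype.piFinset fun i : Fin n => Finset.range (ν i + 1)).filter
          (fun k => ∀ i j : Fin n, (i : ℕ) + 1 = (j : ℕ) → ν i < k j),
          (∏ i, pi' (k i)) * Matrix.det (Matrix.of fun i j : Fin n => (Q (k i)).eval (x j)) :=
  stmt15_general n Q Qhat pi' hrel ν hν x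
end
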